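/- Let 0 ≤ d_c ≤ d−1, and let {a_i}_{i=1}^d and {b_j}_{j=1}^d be orthonormal bases of ℂ^d such that a_i = b_i for all i ≤ d_c, ⟨a_i, b_j⟩ = 0 whenever exactly one of i, j is ≤ d_c, and |⟨a_i, b_j⟩|² = 1/(d−d_c) whenever both i, j > d_c. Let E^A(ρ) = Σ_i |a_i⟩⟨a_i| ρ |a_i⟩⟨a_i| and E^B(ρ) = Σ_j |b_j⟩⟨b_j| ρ |b_j⟩⟨b_j|. Then Σ_{m=1}^{d} λ_max[E^A(|b_m⟩⟨b_m|) + E^B(|b_m⟩⟨b_m|)] ≥ d + d_c + 1, where λ_max denotes the largest eigenvalue of a Hermitian matrix. -/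

import Mathlib

open scoped BigOperators ComplexOrder
open Matrix

noncomputable section

/-- A projective observable: a finite family of mutually orthogonal
self-adjoint idempotents summing to the identity. -/
def IsProjObs {d r : ℕ} (P : Fin r → Matrix (Fin d) (Fin d) ℂ) : Prop :=
  (∀ i, (P i).IsHermitian) ∧ (∀ i, P i * P i = P i) ∧
    (∀ i k, i ≠ k → P i * P k = 0) ∧ (∑ i, P i = 1)

/-- A density matrix: positive semidefinite with unit trace. -/
def IsDensity {d : ℕ} (ρ : Matrix (Fin d) (Fin d) ℂ) : Prop :=
  ρ.PosSemidef ∧ ρ.trace = 1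

/-- The measurement channel `E^A(ρ) = Σ_i P_i ρ P_i` of a projective observable. -/
def measChannel {d r : ℕ} (P : Fin r → Matrix (Fin d) (Fin d) ℂ)
    (ρ : Matrix (Fin d) (Fin d) ℂ) : Matrix (Fin d) (Fin d) ℂ :=
  ∑ i, P i * ρ * P i

/-- `p^B_ρ(j) = tr(P^B_j ρ)`. -/
def probB {d rB : ℕ} (Q : Fin rB → Matrix (Fin d) (Fin d) ℂ)
    (ρ : Matrix (Fin d) (Fin d) ℂ) (j : Fin rB) : ℝ :=
  ((Q j * ρ).trace).re

/-- `q^{A→B}_ρ(j) = tr(P^B_j Σ_i P^A_i ρ P^A_i)`. -/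
def probAB {d rA rB : ℕ} (P : Fin rA → Matrix (Fin d) (Fin d) ℂ)
    (Q : Fin rB → Matrix (Fin d) (Fin d) ℂ)
    (ρ : Matrix (Fin d) (Fin d) ℂ) (j : Fin rB) : ℝ :=
  ((Q j * measChannel P ρ).trace).re

open Classical in
/-- The positive semidefinite square root of a PSD matrix (junk value `0` otherwise). -/
noncomputable def msqrt {d : ℕ} (A : Matrix (Fin d) (Fin d) ℂ) :
    Matrix (Fin d) (Fin d) ℂ :=
  if h : A.PosSemidef then
    h.1.eigenvectorUnitary.1 * diagonal ((↑) ∘ (Real.sqrt ∘ h.1.eigenvalues)) *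
      (star h.1.eigenvectorUnitary : Matrix (Fin d) (Fin d) ℂ)
  else 0

/-- `|X| = √(Xᴴ X)`, the positive semidefinite absolute value of a matrix. -/
noncomputable def matAbs {d : ℕ} (X : Matrix (Fin d) (Fin d) ℂ) :
    Matrix (Fin d) (Fin d) ℂ :=
  msqrt (Xᴴ * X)

/-- The quantum fidelity `F(ρ,σ) = tr √(√ρ σ √ρ)`. -/
noncomputable def qFid {d : ℕ} (ρ σ : Matrix (Fin d) (Fin d) ℂ) : ℝ :=
  ((msqrt (msqrt ρ * σ * msqrt ρ)).trace).re

/-- Variational distance `D_1(p,q) = (1/2) Σ_j |p_j − q_j|`. -/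
def distL1 {rB : ℕ} (p q : Fin rB → ℝ) : ℝ := (1 / 2) * ∑ j, |p j - q j|

/-- Chebyshev distance `D_∞(p,q) = max_j |p_j − q_j|`. -/
noncomputable def distLinf {rB : ℕ} (p q : Fin rB → ℝ) : ℝ := ⨆ j, |p j - q j|

/-- Classical fidelity `F(p,q) = Σ_j √(p_j q_j)`. -/
noncomputable def classFid {rB : ℕ} (p q : Fin rB → ℝ) : ℝ :=
  ∑ j, Real.sqrt (p j * q j)

/-- `Q_1(A→B)`. -/
noncomputable def Q1 {d rA rB : ℕ} (P : Fin rA → Matrix (Fin d) (Fin d) ℂ)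
    (Q : Fin rB → Matrix (Fin d) (Fin d) ℂ) : ℝ :=
  sSup {x : ℝ | ∃ ρ, IsDensity ρ ∧ x = distL1 (probAB P Q ρ) (probB Q ρ)}

/-- `Q_∞(A→B)`. -/
noncomputable def Qinf {d rA rB : ℕ} (P : Fin rA → Matrix (Fin d) (Fin d) ℂ)
    (Q : Fin rB → Matrix (Fin d) (Fin d) ℂ) : ℝ :=
  sSup {x : ℝ | ∃ ρ, IsDensity ρ ∧ x = distLinf (probAB P Q ρ) (probB Q ρ)}

/-- `Q_F(A→B)`. -/
noncomputable def QF {d rA rB : ℕ} (P : Fin rA → Matrix (Fin d) (Fin d) ℂ)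
    (Q : Fin rB → Matrix (Fin d) (Fin d) ℂ) : ℝ :=
  sSup {x : ℝ | ∃ ρ, IsDensity ρ ∧
    x = 1 - (classFid (probAB P Q ρ) (probB Q ρ)) ^ 2}

/-- The rank-one projection `|v⟩⟨v|` onto a (unit) vector `v`. -/
def proj {d : ℕ} (v : Fin d → ℂ) : Matrix (Fin d) (Fin d) ℂ :=
  Matrix.vecMulVec v (star v)

open Classical in
/-- The largest eigenvalue of a Hermitian matrix (junk value `0` otherwise). -/
noncomputable def lamMax {d : ℕ} (M : Matrix (Fin d) (Fin d) ℂ) : ℝ :=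
  if h : M.IsHermitian then ⨆ k, h.eigenvalues k else 0

/-! For each `m`, `λ_max` of the Hermitian matrix `M_m = E^A(|b_m⟩⟨b_m|) + E^B(|b_m⟩⟨b_m|)` is at
least its Rayleigh quotient at `b_m`, namely `Σ_i |⟨a_i, b_m⟩|⁴ + Σ_j |⟨b_j, b_m⟩|⁴ =
1 + Σ_i |⟨a_i, b_m⟩|⁴`. The remaining sum is at least `1` when `m < d_c` (as `a_m = b_m`) and at
least `(d - d_c) · (d - d_c)⁻² = 1 / (d - d_c)` otherwise, so the total is at least
`2 d_c + (d - d_c) (1 + 1 / (d - d_c)) = d + d_c + 1`. -/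

open Finset

lemma proj_mulVec {d : ℕ} (u x : Fin d → ℂ) : proj u *ᵥ x = (star u ⬝ᵥ x) • u := by
  rw [proj, vecMulVec_mulVec, op_smul_eq_smul]

lemma proj_isHermitian {d : ℕ} (u : Fin d → ℂ) : (proj u).IsHermitian := by
  ext i j
  simp [proj, vecMulVec_apply, mul_comm]

lemma measChannel_isHermitian {d r : ℕ} {P : Fin r → Matrix (Fin d) (Fin d) ℂ}
    (hP : ∀ i, (P i).IsHermitian) {ρ : Matrix (Fin d) (Fin d) ℂ} (hρ : ρ.IsHermitian) :
    (measChannel P ρ).IsHermitian :=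
  isSelfAdjoint_sum _ fun i _ => by
    simpa only [(hP i).eq, mul_assoc] using
      (isHermitian_conjTranspose_mul_mul (P i) hρ).isSelfAdjoint

open scoped MatrixOrder in
lemma re_dotProduct_mulVec_le_lamMax {d : ℕ} {M : Matrix (Fin d) (Fin d) ℂ}
    (hM : M.IsHermitian) (v : Fin d → ℂ) :
    (star v ⬝ᵥ M *ᵥ v).re ≤ lamMax M * (star v ⬝ᵥ v).re := by
  have hle : M ≤ algebraMap ℝ _ (lamMax M) := by
    refine le_algebraMap_of_spectrum_le (fun x hx => ?_) hM.isSelfAdjoint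
    rw [hM.spectrum_real_eq_range_eigenvalues] at hx
    obtain ⟨k, rfl⟩ := hx
    rw [lamMax, dif_pos hM]
    exact le_ciSup (Set.finite_range _).bddAbove k
  have := (RCLike.nonneg_iff.mp ((Matrix.le_iff.mp hle).dotProduct_mulVec_nonneg v)).1
  simpa [Matrix.sub_mulVec, Algebra.algebraMap_eq_smul_one, Matrix.smul_mulVec,
    dotProduct_smul] using this

lemma re_star_dotProduct_measChannel_proj_mulVec {d r : ℕ} (c : Fin r → Fin d → ℂ)
    (w : Fin d → ℂ) :
    (star w ⬝ᵥ measChannel (fun i => proj (c i)) (proj w) *ᵥ w).re =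
      ∑ i, Complex.normSq (star (c i) ⬝ᵥ w) ^ 2 := by
  simp only [measChannel, sum_mulVec, dotProduct_sum, Complex.re_sum, ← mulVec_mulVec,
    proj_mulVec, dotProduct_smul, smul_eq_mul]
  refine sum_congr rfl fun i _ => ?_
  rw [star_dotProduct w (c i)]
  generalize star (c i) ⬝ᵥ w = z
  rw [Complex.star_def, ← Complex.ofReal_re (Complex.normSq z ^ 2), Complex.ofReal_pow,
    ← Complex.mul_conj]
  ring_nf

lemma sum_normSq_sq_eq_one_of_orthonormal {d : ℕ} {b : Fin d → Fin d → ℂ}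
    (hb : ∀ i j, star (b i) ⬝ᵥ b j = if i = j then 1 else 0) (m : Fin d) :
    ∑ j, Complex.normSq (star (b j) ⬝ᵥ b m) ^ 2 = 1 := by
  simp [hb, apply_ite Complex.normSq]

lemma one_add_sum_normSq_sq_le_lamMax {d r : ℕ} (a : Fin r → Fin d → ℂ)
    {b : Fin d → Fin d → ℂ}
    (hb : ∀ i j, star (b i) ⬝ᵥ b j = if i = j then 1 else 0) (m : Fin d) :
    1 + ∑ i, Complex.normSq (star (a i) ⬝ᵥ b m) ^ 2 ≤
      lamMax (measChannel (fun i => proj (a i)) (proj (b m)) +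
        measChannel (fun j => proj (b j)) (proj (b m))) := by
  have hM :=
    (measChannel_isHermitian (fun i => proj_isHermitian (a i)) (proj_isHermitian (b m))).add
      (measChannel_isHermitian (fun j => proj_isHermitian (b j)) (proj_isHermitian (b m)))
  have := re_dotProduct_mulVec_le_lamMax hM (b m)
  rwa [add_mulVec, dotProduct_add, Complex.add_re, re_star_dotProduct_measChannel_proj_mulVec,
    re_star_dotProduct_measChannel_proj_mulVec, sum_normSq_sq_eq_one_of_orthonormal hb, hb m m,
    if_pos rfl, Complex.one_re, mul_one, add_comm] at this

lemma card_filter_not_val_lt {n m : ℕ} (h : m ≤ n) :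
    #{i : Fin n | ¬ (i : ℕ) < m} = n - m := by
  rw [filter_not, card_sdiff_of_subset (filter_subset _ _), card_univ,
    Fintype.card_fin, Fin.card_filter_val_lt, min_eq_right h]

lemma one_div_sub_le_sum_sq {d dc : ℕ} (hdc : dc < d) (f : Fin d → ℝ)
    (hf : ∀ i : Fin d, dc ≤ (i : ℕ) → f i = 1 / ((d : ℝ) - dc)) :
    1 / ((d : ℝ) - dc) ≤ ∑ i, f i ^ 2 := by
  have hpos : (0 : ℝ) < d - dc := sub_pos.mpr (by exact_mod_cast hdc)
  calc 1 / ((d : ℝ) - dc)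
        = ∑ i ∈ univ.filter (fun i : Fin d => ¬ (i : ℕ) < dc), f i ^ 2 := by
        rw [sum_congr rfl fun i hi => by rw [hf i (not_lt.mp (mem_filter.mp hi).2)],
          sum_const, card_filter_not_val_lt hdc.le, nsmul_eq_mul, Nat.cast_sub hdc.le]
        field_simp
    _ ≤ ∑ i, f i ^ 2 :=
        sum_le_sum_of_subset_of_nonneg (filter_subset _ _) fun i _ _ => sq_nonneg _

lemma sum_ite_val_lt_eq {d dc : ℕ} (hdc : dc < d) :
    ∑ m : Fin d, (if (m : ℕ) < dc then 2 else 1 + 1 / ((d : ℝ) - dc)) = d + dc + 1 := by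
  have hpos : (0 : ℝ) < d - dc := sub_pos.mpr (by exact_mod_cast hdc)
  rw [sum_ite, sum_const, sum_const, Fin.card_filter_val_lt,
    card_filter_not_val_lt hdc.le, min_eq_right hdc.le, nsmul_eq_mul, nsmul_eq_mul,
    Nat.cast_sub hdc.le]
  field_simp
  ring

theorem stmt_15_general {d dc : ℕ} (hd : 0 < d) (hdc : dc ≤ d - 1)
    (a b : Fin d → (Fin d → ℂ))
    (hb : ∀ i j, star (b i) ⬝ᵥ b j = if i = j then 1 else 0)
    (hcomm : ∀ i : Fin d, (i : ℕ) < dc → a i = b i)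
    (hmub : ∀ i j : Fin d, dc ≤ (i : ℕ) → dc ≤ (j : ℕ) →
      Complex.normSq (star (a i) ⬝ᵥ b j) = 1 / ((d : ℝ) - (dc : ℝ))) :
    ∑ m : Fin d,
        lamMax (measChannel (fun i => proj (a i)) (proj (b m)) +
          measChannel (fun j => proj (b j)) (proj (b m)))
      ≥ (d : ℝ) + (dc : ℝ) + 1 := by
  have hdc' : dc < d := by omega
  rw [ge_iff_le, ← sum_ite_val_lt_eq hdc']
  refine sum_le_sum fun m _ => le_trans ?_ (one_add_sum_normSq_sq_le_lamMax a hb m)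
  split_ifs with hm
  · have hmm : Complex.normSq (star (a m) ⬝ᵥ b m) ^ 2 = 1 := by simp [hcomm m hm, hb]
    have := single_le_sum (fun i _ => sq_nonneg (Complex.normSq (star (a i) ⬝ᵥ b m)))
      (mem_univ m)
    linarith
  · gcongr
    exact one_div_sub_le_sum_sq hdc' _ fun i hi => hmub i m hi (not_lt.mp hm)

theorem stmt_15 {d dc : ℕ} (hd : 0 < d) (hdc : dc ≤ d - 1)
    (a b : Fin d → (Fin d → ℂ))
    (ha : ∀ i j, star (a i) ⬝ᵥ a j = if i = j then 1 else 0)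
    (hb : ∀ i j, star (b i) ⬝ᵥ b j = if i = j then 1 else 0)
    (hcomm : ∀ i : Fin d, (i : ℕ) < dc → a i = b i)
    (horth : ∀ i j : Fin d,
      (((i : ℕ) < dc ∧ dc ≤ (j : ℕ)) ∨ (dc ≤ (i : ℕ) ∧ (j : ℕ) < dc)) →
        star (a i) ⬝ᵥ b j = 0)
    (hmub : ∀ i j : Fin d, dc ≤ (i : ℕ) → dc ≤ (j : ℕ) →
      Complex.normSq (star (a i) ⬝ᵥ b j) = 1 / ((d : ℝ) - (dc : ℝ))) :
    ∑ m : Fin d,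
        lamMax (measChannel (fun i => proj (a i)) (proj (b m)) +
          measChannel (fun j => proj (b j)) (proj (b m)))
      ≥ (d : ℝ) + (dc : ℝ) + 1 :=
  stmt_15_general hd hdc a b hb hcomm hmub

end
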